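/- arXiv:2210.01759 — 2 statements merged into one kernel-verified Lean document; each statement's English description precedes it below -/
import Mathlib

section
/- If the signed distance Dist(s, J) > 0 then s ∈ J, and if Dist(s, J) < 0 then s ∉ J. In particular, positive robustness of an atomic predicate implies Boolean satisfaction. -/
open Metric Classical

/-- The signed distance to a set `J`. -/
noncomputable def signedDistSet {d : ℕ} (J : Set (EuclideanSpace ℝ (Fin d)))
    (s : EuclideanSpace ℝ (Fin d)) : ℝ :=
  if s ∈ J then Metric.infDist s Jᶜ else - Metric.infDist s J

section

variable {d : ℕ} {J : Set (EuclideanSpace ℝ (Fin d))} {s : EuclideanSpace ℝ (Fin d)}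

theorem signedDistSet_nonneg_of_mem (hs : s ∈ J) : 0 ≤ signedDistSet J s := by
  rw [signedDistSet, if_pos hs]
  exact infDist_nonneg

theorem signedDistSet_nonpos_of_notMem (hs : s ∉ J) : signedDistSet J s ≤ 0 := by
  rw [signedDistSet, if_neg hs]
  exact neg_nonpos.mpr infDist_nonneg

end

theorem signedDist_sign {d : ℕ} (J : Set (EuclideanSpace ℝ (Fin d)))
    (s : EuclideanSpace ℝ (Fin d)) :
    (0 < signedDistSet J s → s ∈ J) ∧ (signedDistSet J s < 0 → s ∉ J) :=
  ⟨fun hpos => by_contra fun hs => (signedDistSet_nonpos_of_notMem hs).not_gt hpos,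
    fun hneg hs => (signedDistSet_nonneg_of_mem hs).not_gt hneg⟩
end

section
/- For the bounded-until robustness ρ(s, φ₁ U_{[a,b)} φ₂, t) = max over t' ∈ [t+a, t+b) of min(ρ(s, φ₂, t'), min over t'' ∈ [t+a, t') of ρ(s, φ₁, t'')), if this value is positive and positive robustness implies satisfaction for φ₁ and φ₂, then the Boolean until semantics holds: there exists t' ∈ [t+a, t+b) with (s,t') ⊨ φ₂ and (s,t'') ⊨ φ₁ for all t'' ∈ [t+a, t'). -/
/-- Robustness of the bounded until `φ₁ U_{[a,b)} φ₂` at time `t`, given the robustness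
signals `ρ₁ ρ₂ : ℕ → ℝ` of the subformulas:
`max_{t' ∈ [t+a, t+b)} min(ρ₂(t'), min_{t'' ∈ [t+a, t')} ρ₁(t''))`,
where the inner minimum over an empty range is omitted. -/
noncomputable def untilRobust (ρ₁ ρ₂ : ℕ → ℝ) (t a b : ℕ) (hab : a < b) : ℝ :=
  (Finset.Ico (t + a) (t + b)).sup'
    (by rw [Finset.nonempty_Ico]; omega)
    (fun t' =>
      if h : (Finset.Ico (t + a) t').Nonempty then
        min (ρ₂ t') ((Finset.Ico (t + a) t').inf' h ρ₁)
      else ρ₂ t')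

/-- Soundness of the bounded-until robustness: if the until robustness is positive and
positive robustness implies Boolean satisfaction for the subformulas, then the Boolean
until semantics holds. -/
theorem until_robust_sound (ρ₁ ρ₂ : ℕ → ℝ) (sat₁ sat₂ : ℕ → Prop)
    (h1 : ∀ τ, 0 < ρ₁ τ → sat₁ τ) (h2 : ∀ τ, 0 < ρ₂ τ → sat₂ τ)
    (t a b : ℕ) (hab : a < b)
    (hpos : 0 < untilRobust ρ₁ ρ₂ t a b hab) :
    ∃ t', t + a ≤ t' ∧ t' < t + b ∧ sat₂ t' ∧ ∀ t'', t + a ≤ t'' → t'' < t' → sat₁ t'' := by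
  unfold untilRobust at hpos
  rw [Finset.lt_sup'_iff] at hpos
  obtain ⟨t', ht', hf⟩ := hpos
  rw [Finset.mem_Ico] at ht'
  refine ⟨t', ht'.1, ht'.2, ?_, ?_⟩
  · apply h2
    split_ifs at hf with h
    · exact lt_of_lt_of_le hf (min_le_left _ _)
    · exact hf
  · intro t'' ha hb'
    have hne : (Finset.Ico (t + a) t').Nonempty := ⟨t'', Finset.mem_Ico.2 ⟨ha, hb'⟩⟩
    rw [dif_pos hne] at hf
    have := lt_of_lt_of_le hf (min_le_right _ _)
    exact h1 _ (lt_of_lt_of_le this (Finset.inf'_le _ (Finset.mem_Ico.2 ⟨ha, hb'⟩)))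
end
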